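/- arXiv:math/9803029 — 10 statements merged into one kernel-verified Lean document; each statement's English description precedes it below -/
import Mathlib

section
/- Let F be a field, q a power of the characteristic, and let β(x:y:z) = (z:x:y), γ(x:y:z) = (x^q:y^q:z^q) be maps on the projective plane over the algebraic closure of F_q. A point P = (b:c:1) is fixed by β∘γ if and only if b^{q²+q+1} = 1, c = b^{q+1}, and b c^q = 1; in particular the fixed points of β∘γ with nonzero last coordinate are exactly the points (a^i : a^{(q+1)i} : 1) for a a fixed primitive (q²+q+1)-th root of unity in F_{q³} and 0 ≤ i ≤ q² + q. -/
/-! The scalar relating `(b : c : 1)` and its image `(1 : b^q : c^q)` must be `l = b`, so the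
fixed-point condition says `c = b^(q+1)` and `b c^q = 1`; given the first, the second reads
`b^(q²+q+1) = 1`, and the `(q²+q+1)`-th roots of unity are the powers of `a`. -/

theorem mul_pow_succ_pow_eq {M : Type*} [Monoid M] (b : M) (q : ℕ) :
    b * (b ^ (q + 1)) ^ q = b ^ (q ^ 2 + q + 1) := by
  rw [← pow_mul, ← pow_succ']
  ring_nf

theorem exists_mul_eq_rotate_pow_iff {M : Type*} [MonoidWithZero M] [Nontrivial M]
    (q : ℕ) (b c : M) :
    (∃ l : M, l ≠ 0 ∧ b = l * 1 ∧ c = l * b ^ q ∧ (1 : M) = l * c ^ q) ↔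
      (b ^ (q ^ 2 + q + 1) = 1 ∧ c = b ^ (q + 1) ∧ b * c ^ q = 1) := by
  constructor
  · rintro ⟨l, -, hb, rfl, h1⟩
    rw [mul_one] at hb
    subst hb
    rw [← pow_succ'] at h1 ⊢
    exact ⟨mul_pow_succ_pow_eq b q ▸ h1.symm, rfl, h1.symm⟩
  · rintro ⟨-, rfl, h1⟩
    exact ⟨b, left_ne_zero_of_mul_eq_one h1, (mul_one b).symm, pow_succ' b q, h1.symm⟩

theorem stmt4_general {K : Type*} [Field K] (q : ℕ)
    (a : K) (ha : IsPrimitiveRoot a (q ^ 2 + q + 1)) :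
    (∀ b c : K,
      (∃ l : K, l ≠ 0 ∧ b = l * 1 ∧ c = l * b ^ q ∧ (1 : K) = l * c ^ q) ↔
        (b ^ (q ^ 2 + q + 1) = 1 ∧ c = b ^ (q + 1) ∧ b * c ^ q = 1)) ∧
    {bc : K × K |
        bc.1 ^ (q ^ 2 + q + 1) = 1 ∧ bc.2 = bc.1 ^ (q + 1) ∧ bc.1 * bc.2 ^ q = 1}
      = {bc : K × K | ∃ i : ℕ, i ≤ q ^ 2 + q ∧ bc = (a ^ i, a ^ ((q + 1) * i))} := by
  refine ⟨exists_mul_eq_rotate_pow_iff q, ?_⟩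
  ext ⟨b, c⟩
  simp only [Set.mem_ofPred_eq, Prod.mk.injEq]
  constructor
  · rintro ⟨hb, rfl, -⟩
    obtain ⟨i, hi, rfl⟩ := ha.eq_pow_of_pow_eq_one hb
    exact ⟨i, Nat.le_of_lt_succ hi, rfl, by rw [← pow_mul, mul_comm]⟩
  · rintro ⟨i, -, rfl, rfl⟩
    have hroot : (a ^ i) ^ (q ^ 2 + q + 1) = 1 := by rw [pow_right_comm, ha.pow_eq_one, one_pow]
    rw [mul_comm, pow_mul]
    exact ⟨hroot, rfl, by rw [mul_pow_succ_pow_eq, hroot]⟩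

/-- Over the algebraic closure of F_q, with β(x:y:z)=(z:x:y) and
γ(x:y:z)=(x^q:y^q:z^q), a point (b:c:1) is fixed by β∘γ (i.e. (b:c:1)=(1:b^q:c^q)
projectively) iff b^{q²+q+1}=1, c=b^{q+1} and b·c^q=1; and these fixed points are
exactly (a^i : a^{(q+1)i} : 1) for 0 ≤ i ≤ q²+q, a a primitive (q²+q+1)-th root
of unity. -/
theorem stmt4 {K : Type*} [Field K] [IsAlgClosed K] (p n q : ℕ)
    (hp : p.Prime) [CharP K p] (hq : q = p ^ n) (hn : 0 < n)
    (a : K) (ha : IsPrimitiveRoot a (q ^ 2 + q + 1)) :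
    (∀ b c : K,
      (∃ l : K, l ≠ 0 ∧ b = l * 1 ∧ c = l * b ^ q ∧ (1 : K) = l * c ^ q) ↔
        (b ^ (q ^ 2 + q + 1) = 1 ∧ c = b ^ (q + 1) ∧ b * c ^ q = 1)) ∧
    {bc : K × K |
        bc.1 ^ (q ^ 2 + q + 1) = 1 ∧ bc.2 = bc.1 ^ (q + 1) ∧ bc.1 * bc.2 ^ q = 1}
      = {bc : K × K | ∃ i : ℕ, i ≤ q ^ 2 + q ∧ bc = (a ^ i, a ^ ((q + 1) * i))} :=
  stmt4_general q a ha
end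

section
/- Let q be a prime power which is a perfect square with integer square root s = √q, and let a be a root of the polynomial f(X) = X^{s+1} + X + 1 in the algebraic closure of F_q. Then a^{q+s+1} = 1, and hence a^{s³} = a, i.e., a lies in the field F_{s³}. -/
/-! With `b = a ^ s`, applying the Frobenius `x ↦ x ^ s` to `a ^ (s + 1) + a + 1 = 0` gives
`b ^ (s + 1) + b + 1 = 0`, and then `a ^ (s² + s + 1) = a · b ^ (s + 1) = -a (b + 1) = -(a b + a) = 1`
because `a b = a ^ (s + 1) = -(a + 1)`. Finally `s³ ≡ 1 (mod s² + s + 1)`. -/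

theorem pow_sq_add_add_one_eq_one_of_pow_succ_add_add_one_eq_zero {R : Type*} [CommRing R]
    (p n : ℕ) [ExpChar R p] {a : R} (ha : a ^ (p ^ n + 1) + a + 1 = 0) :
    a ^ ((p ^ n) ^ 2 + p ^ n + 1) = 1 := by
  set s := p ^ n
  have hb : (a ^ s) ^ (s + 1) + a ^ s + 1 = 0 := by
    have := congrArg (iterateFrobenius R p n) ha
    rwa [map_add, map_add, map_pow, map_one, map_zero, iterateFrobenius_def] at this
  calc a ^ (s ^ 2 + s + 1) = a * (a ^ s) ^ (s + 1) := by ring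
    _ = 1 := by linear_combination a * hb - ha

theorem pow_pow_three_eq_self_of_pow_sq_add_add_one_eq_one {M : Type*} [Monoid M] {a : M}
    {s : ℕ} (h : a ^ (s ^ 2 + s + 1) = 1) : a ^ s ^ 3 = a := by
  cases s with
  | zero => simpa using h.symm
  | succ t =>
    rw [show (t + 1) ^ 3 = ((t + 1) ^ 2 + (t + 1) + 1) * t + 1 by ring, pow_succ, pow_mul, h,
      one_pow, one_mul]

theorem stmt6_general {K : Type*} [Field K] (p n s q : ℕ)
    (hp : p.Prime) [CharP K p] (hs : s = p ^ n) (hq : q = s ^ 2)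
    (a : K) (ha : a ^ (s + 1) + a + 1 = 0) :
    a ^ (q + s + 1) = 1 ∧ a ^ (s ^ 3) = a := by
  have : Fact p.Prime := ⟨hp⟩
  subst hs hq
  have key := pow_sq_add_add_one_eq_one_of_pow_succ_add_add_one_eq_zero p n ha
  exact ⟨key, pow_pow_three_eq_self_of_pow_sq_add_add_one_eq_one key⟩

/-- s a prime power, q = s², a a root of X^{s+1}+X+1 in the
algebraic closure of F_s. Then a^{q+s+1} = 1 and a^{s³} = a. -/
theorem stmt6 {K : Type*} [Field K] [IsAlgClosed K] (p n s q : ℕ)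
    (hp : p.Prime) [CharP K p] (hs : s = p ^ n) (hn : 0 < n) (hq : q = s ^ 2)
    (a : K) (ha : a ^ (s + 1) + a + 1 = 0) :
    a ^ (q + s + 1) = 1 ∧ a ^ (s ^ 3) = a :=
  stmt6_general p n s q hp hs hq a ha
end

section
/- Let q be a perfect square with integer square root s, and let a satisfy a^{s+1} + a + 1 = 0. Then a(a+1)(a^{qs + s + 1} + a^{q+1} + a^s) = -(a² + a + 1)², where q = s². In particular a^{qs+s+1} + a^{q+1} + a^s = 0 if and only if a² + a + 1 = 0. -/
/-!
Put `b = σ a`, `c = σ² a`, `d = σ³ a` for the Frobenius `σ x = x ^ s`. Applying `σ` to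
`a b = -(a + 1)` gives `b c = -(b + 1)` and `c d = -(c + 1)`, whence `a b c = 1 = b c d`, so
`d = a`, i.e. `a ^ (s ^ 3) = a`. The exponents in the claim then reduce it to a polynomial identity
in `a, b, c` modulo `a b = -(a + 1)` and `c (a + 1) = -1`; the latter also makes `a (a + 1)` a unit,
which gives the equivalence.
-/

namespace TwistedRoot

variable {R : Type*} [CommRing R] (σ : R →+* R) {a : R}

theorem map_mul_map_add_add_one_eq_zero (ha : a * σ a + a + 1 = 0) :
    σ a * σ (σ a) + σ a + 1 = 0 := by
  simpa using congrArg σ ha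

theorem mul_map_mul_map_map_eq_one (ha : a * σ a + a + 1 = 0) :
    a * σ a * σ (σ a) = 1 := by
  linear_combination a * map_mul_map_add_add_one_eq_zero σ ha - ha

theorem map_map_map_eq_self (ha : a * σ a + a + 1 = 0) : σ (σ (σ a)) = a := by
  have habc := mul_map_mul_map_map_eq_one σ ha
  have hbcd := mul_map_mul_map_map_eq_one σ (map_mul_map_add_add_one_eq_zero σ ha)
  linear_combination a * hbcd - σ (σ (σ a)) * habc

theorem map_map_mul_add_one_eq_neg_one (ha : a * σ a + a + 1 = 0) :
    σ (σ a) * (a + 1) = -1 := by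
  linear_combination σ (σ a) * ha - mul_map_mul_map_map_eq_one σ ha

theorem isUnit_mul_add_one (ha : a * σ a + a + 1 = 0) : IsUnit (a * (a + 1)) := by
  have hunit_a : a * (σ a * σ (σ a)) = 1 := by
    rw [← mul_assoc, mul_map_mul_map_map_eq_one σ ha]
  have hunit_a_add_one : (a + 1) * -σ (σ a) = 1 := by
    linear_combination -map_map_mul_add_one_eq_neg_one σ ha
  exact (IsUnit.of_mul_eq_one _ hunit_a).mul (IsUnit.of_mul_eq_one _ hunit_a_add_one)

theorem mul_add_one_mul_eq_neg_sq (ha : a * σ a + a + 1 = 0) :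
    a * (a + 1) * (a * σ a * a + σ (σ a) * a + σ a) = -(a ^ 2 + a + 1) ^ 2 := by
  linear_combination (a ^ 2 + 1) * (a + 1) * ha + a ^ 2 * map_map_mul_add_one_eq_neg_one σ ha

end TwistedRoot

open TwistedRoot in
theorem stmt8_general {K : Type*} [Field K] (p n s q : ℕ)
    (hp : p.Prime) [CharP K p] (hs : s = p ^ n) (hq : q = s ^ 2)
    (a : K) (ha : a ^ (s + 1) + a + 1 = 0) :
    a * (a + 1) * (a ^ (q * s + s + 1) + a ^ (q + 1) + a ^ s)
        = -(a ^ 2 + a + 1) ^ 2 ∧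
      (a ^ (q * s + s + 1) + a ^ (q + 1) + a ^ s = 0 ↔ a ^ 2 + a + 1 = 0) := by
  have : ExpChar K p := ExpChar.prime hp
  set σ := iterateFrobenius K p n
  have hσ (x : K) : σ x = x ^ s := by rw [hs]; rfl
  have hσa : a * σ a + a + 1 = 0 := by rw [hσ]; linear_combination ha
  have hcube : a ^ s ^ 3 = a := by
    simpa only [hσ, ← pow_mul, ← pow_three'] using map_map_map_eq_self σ hσa
  have hsum : a ^ (q * s + s + 1) + a ^ (q + 1) + a ^ s = a * σ a * a + σ (σ a) * a + σ a := by
    rw [hq, ← pow_succ, pow_add, pow_add, hcube]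
    simp only [hσ, ← pow_mul, ← sq]
    ring
  have key := mul_add_one_mul_eq_neg_sq σ hσa
  rw [← hsum] at key
  refine ⟨key, ?_⟩
  rw [← (isUnit_mul_add_one σ hσa).mul_right_eq_zero, key, neg_eq_zero,
    pow_eq_zero_iff two_ne_zero]

/-- With q = s² and a^{s+1}+a+1 = 0 in the algebraic closure of F_s,
a(a+1)(a^{qs+s+1} + a^{q+1} + a^s) = -(a²+a+1)²; in particular
a^{qs+s+1} + a^{q+1} + a^s = 0 iff a²+a+1 = 0. -/
theorem stmt8 {K : Type*} [Field K] [IsAlgClosed K] (p n s q : ℕ)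
    (hp : p.Prime) [CharP K p] (hs : s = p ^ n) (hn : 0 < n) (hq : q = s ^ 2)
    (a : K) (ha : a ^ (s + 1) + a + 1 = 0) :
    a * (a + 1) * (a ^ (q * s + s + 1) + a ^ (q + 1) + a ^ s)
        = -(a ^ 2 + a + 1) ^ 2 ∧
      (a ^ (q * s + s + 1) + a ^ (q + 1) + a ^ s = 0 ↔ a ^ 2 + a + 1 = 0) :=
  stmt8_general p n s q hp hs hq a ha
end

section
/- Let s ≥ 2. The polynomial f(X) = X^{s+1} + X + 1 over F_s is separable (has s+1 distinct roots in the algebraic closure), and since s + 1 ≥ 3, there exists a root a of f with a² + a + 1 ≠ 0. -/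
/-!
Since `s = 0` in `K`, the derivative of `f = X^(s+1) + X + 1` is `X^s + 1`, and `f - X f' = 1`
shows that `f` is separable. Hence `f` has `s + 1 ≥ 3` distinct roots, which cannot all lie among
the at most two roots of `X^2 + X + 1`.
-/

open Polynomial

namespace Polynomial

variable {R : Type*}

theorem derivative_X_pow_add_X_add_one_of_cast_eq_zero [CommRing R] {s : ℕ} (hs : (s : R) = 0) :
    derivative (X ^ (s + 1) + X + 1 : R[X]) = X ^ s + 1 := by
  simp [hs]

theorem separable_X_pow_add_X_add_one_of_cast_eq_zero [CommRing R] {s : ℕ} (hs : (s : R) = 0) :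
    (X ^ (s + 1) + X + 1 : R[X]).Separable := by
  refine ⟨1, -X, ?_⟩
  rw [derivative_X_pow_add_X_add_one_of_cast_eq_zero hs]
  ring

theorem natDegree_X_pow_add_X_add_one [CommRing R] [Nontrivial R] {s : ℕ} (hs : s ≠ 0) :
    (X ^ (s + 1) + X + 1 : R[X]).natDegree = s + 1 := by
  compute_degree!
  simp [hs]

theorem exists_isRoot_not_isRoot_of_natDegree_lt_card_roots [CommRing R] [IsDomain R]
    {p q : R[X]} (hq : q ≠ 0) (hp : p.roots.Nodup) (hcard : q.natDegree < p.roots.card) :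
    ∃ a, p.IsRoot a ∧ ¬ q.IsRoot a := by
  by_contra! h
  have hle : p.roots ≤ q.roots := (Multiset.le_iff_subset hp).2 fun a ha =>
    (mem_roots hq).2 (h a (mem_roots'.1 ha).2)
  exact (Multiset.card_le_card hle).trans (card_roots' q) |>.not_gt hcard

end Polynomial

/-- For s a prime power, f(X) = X^{s+1}+X+1 is separable with s+1
distinct roots in the algebraic closure, and there is a root a with a²+a+1 ≠ 0. -/
theorem stmt9 {K : Type*} [Field K] [IsAlgClosed K] (p n s : ℕ)
    (hp : p.Prime) [CharP K p] (hs : s = p ^ n) (hn : 0 < n) :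
    (Polynomial.X ^ (s + 1) + Polynomial.X + 1 : Polynomial K).Separable ∧
    (Polynomial.X ^ (s + 1) + Polynomial.X + 1 : Polynomial K).roots.Nodup ∧
    Multiset.card (Polynomial.X ^ (s + 1) + Polynomial.X + 1 : Polynomial K).roots
        = s + 1 ∧
    ∃ a : K, a ^ (s + 1) + a + 1 = 0 ∧ a ^ 2 + a + 1 ≠ 0 := by
  have hs0 : (s : K) = 0 := (CharP.cast_eq_zero_iff K p s).2 (hs ▸ dvd_pow_self p hn.ne')
  have hs2 : 2 ≤ s := hs ▸ Nat.one_lt_pow hn.ne' hp.one_lt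
  have hsep := separable_X_pow_add_X_add_one_of_cast_eq_zero hs0
  have hcard : Multiset.card (X ^ (s + 1) + X + 1 : K[X]).roots = s + 1 := by
    rw [IsAlgClosed.card_roots_eq_natDegree, natDegree_X_pow_add_X_add_one (by omega)]
  have hqdeg : (X ^ 2 + X + 1 : K[X]).natDegree = 2 := by compute_degree!
  obtain ⟨a, hfa, hqa⟩ := exists_isRoot_not_isRoot_of_natDegree_lt_card_roots
    (ne_zero_of_natDegree_gt (hqdeg ▸ two_pos)) (nodup_roots hsep) (by omega)
  exact ⟨hsep, nodup_roots hsep, hcard, a, by simpa using hfa, by simpa using hqa⟩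
end

section
/- Let m ≥ 2 and ℓ be integers with m/2 ≤ ℓ < m and ℓ ∈ {⌊(m+1)/2⌋, m-1}. Then the numerical semigroup generated by ℓ, m, and m+1 has genus (number of gaps) equal to ⌊(m-1)²/4⌋. -/
open Finset

/-- Sum of the first `n` odd numbers. -/
private lemma oddsum (n : ℕ) : ∑ i ∈ range n, (2*i+1) = n^2 := by
  induction n with
  | zero => simp
  | succ k ih =>
    rw [Finset.sum_range_succ, ih]
    have : (k+1)^2 = k^2 + (2*k+1) := by ring
    omega

/-- Key sum for the interval case. -/
private lemma sumkey : ∀ n : ℕ, ∑ k ∈ range n, (n - 2*(k+1)) = (n-1)^2/4 := by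
  intro n
  induction n using Nat.strong_induction_on with
  | _ n ih =>
    match n with
    | 0 => simp
    | 1 => simp
    | (m+2) =>
      have h1 : ∑ k ∈ range (m+2), (m+2 - 2*(k+1)) = ∑ k ∈ range (m+2), (m - 2*k) := by
        apply Finset.sum_congr rfl; intro k _; omega
      rw [h1, Finset.sum_range_succ' (fun k => m - 2*k) (m+1), Finset.sum_range_succ]
      have h2 : ∑ k ∈ range m, (m - 2*(k+1)) = (m-1)^2/4 := ih m (by omega)
      rw [h2]
      rcases Nat.eq_zero_or_pos m with rfl | hm
      · simp
      · obtain ⟨t, rfl⟩ : ∃ t, m = t+1 := ⟨m-1, by omega⟩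
        have e1 : (t+1+2-1)^2 = t^2 + 4*(t+1) := by
          simp only [show t+1+2-1 = t+2 from rfl]; ring
        have e2 : (t+1-1)^2 = t^2 := by norm_num
        omega

/-- Case A membership: generators n+1, n+2, n+3. -/
private lemma memA (n x : ℕ) :
    (∃ α β γ : ℕ, x = α*(n+1) + β*(n+2) + γ*(n+2+1)) ↔
      ∃ s : ℕ, s*(n+1) ≤ x ∧ x ≤ s*(n+3) := by
  constructor
  · rintro ⟨a, b, c, rfl⟩
    refine ⟨a+b+c, ?_, ?_⟩
    · have e : (a+b+c)*(n+1) + (b + 2*c) = a*(n+1) + b*(n+2) + c*(n+2+1) := by ring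
      omega
    · have e : (a+b+c)*(n+3) = a*(n+1) + b*(n+2) + c*(n+2+1) + (2*a + b) := by ring
      omega
  · rintro ⟨s, hs1, hs2⟩
    rcases le_or_gt (s*(n+2)) x with h | h
    · refine ⟨0, s - (x - s*(n+2)), x - s*(n+2), ?_⟩
      have hc : x - s*(n+2) ≤ s := by
        have e : s*(n+3) = s*(n+2) + s := by ring
        omega
      set c := x - s*(n+2) with hcdef
      have e1 : (s - c)*(n+2) = s*(n+2) - c*(n+2) := Nat.sub_mul s c (n+2)
      have e2 : c*(n+2+1) = c*(n+2) + c := by ring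
      have e3 : c*(n+2) ≤ s*(n+2) := Nat.mul_le_mul_right _ hc
      omega
    · refine ⟨s*(n+2) - x, s - (s*(n+2) - x), 0, ?_⟩
      have hc : s*(n+2) - x ≤ s := by
        have e : s*(n+2) = s*(n+1) + s := by ring
        omega
      set d := s*(n+2) - x with hddef
      have e1 : (s - d)*(n+2) = s*(n+2) - d*(n+2) := Nat.sub_mul s d (n+2)
      have e2 : d*(n+1) = d*(n+2) - d := by
        have : d*(n+2) = d*(n+1) + d := by ring
        omega
      have e3 : d*(n+2) ≤ s*(n+2) := Nat.mul_le_mul_right _ hc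
      have e4 : d ≤ d*(n+2) := by nlinarith
      omega

/-- Case A: l = m - 1, with m = n+2. -/
private lemma caseA (n : ℕ) :
    {x : ℕ | ¬ ∃ α β γ : ℕ, x = α * (n+1) + β * (n+2) + γ * (n+2+1)}.ncard
      = (n+2-1)^2/4 := by
  have hset : {x : ℕ | ¬ ∃ α β γ : ℕ, x = α * (n+1) + β * (n+2) + γ * (n+2+1)}
      = ↑((range (n+2)).biUnion fun k => Finset.Ioo (k*(n+3)) ((k+1)*(n+1))) := by
    ext x
    simp only [Set.mem_setOf_eq, Finset.coe_biUnion, Set.mem_iUnion, Finset.mem_coe,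
      Finset.mem_Ioo, Finset.mem_range, memA]
    constructor
    · intro h
      push_neg at h
      set k := x / (n+3) with hk
      have hdm : (n+3)*k + x % (n+3) = x := Nat.div_add_mod x (n+3)
      have hcm : k*(n+3) = (n+3)*k := by ring
      have hklt : k*(n+3) ≤ x := by omega
      have hne : k*(n+3) ≠ x := by
        intro he
        have hle : k*(n+1) ≤ k*(n+3) := Nat.mul_le_mul_left _ (by omega)
        have := h k (by omega)
        omega
      have hub : x < (k+1)*(n+3) := by
        have hm := Nat.mod_lt x (show 0 < n+3 by omega)
        have e : (k+1)*(n+3) = (n+3)*k + (n+3) := by ring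
        omega
      have hx2 : x < (k+1)*(n+1) := by
        rcases le_or_gt ((k+1)*(n+1)) x with hle | hlt
        · exact absurd (h (k+1) hle) (by omega)
        · exact hlt
      refine ⟨k, ?_, by omega, hx2⟩
      · have e1 : k*(n+3) = k*n + 3*k := by ring
        have e2 : (k+1)*(n+1) = k*n + k + n + 1 := by ring
        omega
    · rintro ⟨k, _, hlo, hhi⟩ ⟨s, hs1, hs2⟩
      have hsk : s ≤ k := by
        have : s*(n+1) < (k+1)*(n+1) := by omega
        have := Nat.lt_of_mul_lt_mul_right this
        omega
      have : s*(n+3) ≤ k*(n+3) := Nat.mul_le_mul_right _ hsk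
      omega
  rw [hset, Set.ncard_coe_finset]
  rw [Finset.card_biUnion]
  · have hterm : ∀ k ∈ range (n+2), (Finset.Ioo (k*(n+3)) ((k+1)*(n+1))).card
        = (n+2) - 2*(k+1) := by
      intro k _
      rw [Nat.card_Ioo]
      have e1 : k*(n+3) = k*n + 3*k := by ring
      have e2 : (k+1)*(n+1) = k*n + k + n + 1 := by ring
      omega
    rw [Finset.sum_congr rfl hterm, sumkey]
  · intro a _ b _ hab
    have key : ∀ u v : ℕ, u < v →
        Disjoint (Finset.Ioo (u*(n+3)) ((u+1)*(n+1))) (Finset.Ioo (v*(n+3)) ((v+1)*(n+1))) := by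
      intro u v huv
      rw [Finset.disjoint_left]
      intro x hx hx'
      simp only [Finset.mem_Ioo] at hx hx'
      have h1 : (u+1)*(n+1) ≤ (u+1)*(n+3) := Nat.mul_le_mul_left _ (by omega)
      have h2 : (u+1)*(n+3) ≤ v*(n+3) := Nat.mul_le_mul_right _ (by omega)
      omega
    rcases lt_or_gt_of_ne hab with h | h
    · exact key a b h
    · exact (key b a h).symm

/-- Case B membership: generators l, 2l, 2l+1. -/
private lemma memB (l x : ℕ) (hl : 0 < l) :
    (∃ α β γ : ℕ, x = α*l + β*(2*l) + γ*(2*l+1)) ↔ (x % l) * (2*l+1) ≤ x := by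
  constructor
  · rintro ⟨a, b, c, rfl⟩
    have hmod : (a*l + b*(2*l) + c*(2*l+1)) % l = c % l := by
      have e : a*l + b*(2*l) + c*(2*l+1) = c + (a + 2*b + 2*c)*l := by ring
      rw [e, Nat.add_mul_mod_self_right]
    rw [hmod]
    calc c % l * (2*l+1) ≤ c * (2*l+1) := Nat.mul_le_mul_right _ (Nat.mod_le c l)
    _ ≤ a*l + b*(2*l) + c*(2*l+1) := by omega
  · intro h
    set r := x % l with hr
    set q := x / l with hq
    have hdm : l*q + r = x := Nat.div_add_mod x l
    have h3 : l*(2*r) ≤ l*q := by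
      have e : r*(2*l+1) = l*(2*r) + r := by ring
      omega
    have h2 : 2*r ≤ q := Nat.le_of_mul_le_mul_left h3 hl
    refine ⟨q - 2*r, 0, r, ?_⟩
    have e1 : (q - 2*r)*l = q*l - (2*r)*l := Nat.sub_mul q (2*r) l
    have e2 : r*(2*l+1) = (2*r)*l + r := by ring
    have e3 : (2*r)*l ≤ q*l := Nat.mul_le_mul_right _ h2
    have e4 : l*q = q*l := by ring
    omega

/-- Case B: m = 2l, l = t+1. -/
private lemma caseB (t : ℕ) :
    {x : ℕ | ¬ ∃ α β γ : ℕ, x = α * (t+1) + β * (2*(t+1)) + γ * (2*(t+1)+1)}.ncard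
      = (2*(t+1)-1)^2/4 := by
  set l := t + 1 with hldef
  have hl : 0 < l := Nat.succ_pos t
  have hset : {x : ℕ | ¬ ∃ α β γ : ℕ, x = α * l + β * (2*l) + γ * (2*l+1)}
      = ↑((range l).biUnion fun r => (range (2*r)).image fun j => r + j*l) := by
    ext x
    simp only [Set.mem_setOf_eq, Finset.coe_biUnion, Set.mem_iUnion, Finset.mem_coe,
      Finset.mem_image, Finset.mem_range, memB l x hl, not_le]
    constructor
    · intro h
      refine ⟨x % l, Nat.mod_lt x hl, x / l, ?_, Nat.mod_add_div' x l⟩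
      set r := x % l with hr
      set q := x / l with hq
      have hdm : l*q + r = x := Nat.div_add_mod x l
      have e : r*(2*l+1) = r + (2*r)*l := by ring
      have e2 : l*q = q*l := by ring
      have e3 : q*l < (2*r)*l := by omega
      exact Nat.lt_of_mul_lt_mul_right e3
    · rintro ⟨r, hrl, j, hj, rfl⟩
      have hmod : (r + j*l) % l = r := by
        rw [Nat.add_mul_mod_self_right, Nat.mod_eq_of_lt hrl]
      rw [hmod]
      have e : r*(2*l+1) = r + (2*r)*l := by ring
      have e2 : j*l < (2*r)*l := (Nat.mul_lt_mul_right hl).mpr hj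
      omega
  rw [hset, Set.ncard_coe_finset, Finset.card_biUnion]
  · have hterm : ∀ r ∈ range l, ((range (2*r)).image fun j => r + j*l).card = r * 2 := by
      intro r _
      rw [Finset.card_image_of_injective _ (fun a b hab => by
        have : a * l = b * l := by omega
        exact Nat.eq_of_mul_eq_mul_right hl this), Finset.card_range]
      ring
    rw [Finset.sum_congr rfl hterm, ← Finset.sum_mul, Finset.sum_range_id_mul_two]
    have e : (2*l-1)^2 = 4*(l*(l-1)) + 1 := by
      rw [hldef]
      simp only [show 2*(t+1)-1 = 2*t+1 from by omega, Nat.add_sub_cancel]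
      ring
    omega
  · intro a ha b hb hab
    rw [Function.onFun, Finset.disjoint_left]
    rintro x hx hx'
    simp only [Finset.mem_coe, Finset.mem_image, Finset.mem_range] at hx hx' ha hb
    obtain ⟨j, _, rfl⟩ := hx
    obtain ⟨j', _, he⟩ := hx'
    apply hab
    have h1 : (a + j*l) % l = a := by rw [Nat.add_mul_mod_self_right, Nat.mod_eq_of_lt ha]
    have h2 : (b + j'*l) % l = b := by rw [Nat.add_mul_mod_self_right, Nat.mod_eq_of_lt hb]
    rw [← h1, ← he, h2]

/-- Case C membership reduction: generators k+1, 2k+1, 2k+2. -/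
private lemma memC (k x : ℕ) :
    (∃ α β γ : ℕ, x = α*(k+1) + β*(2*k+1) + γ*(2*k+1+1)) ↔
      ∃ a b : ℕ, x = a*(k+1) + b*(2*k+1) := by
  constructor
  · rintro ⟨a, b, c, rfl⟩
    exact ⟨a + 2*c, b, by ring⟩
  · rintro ⟨a, b, rfl⟩
    exact ⟨a, b, 0, by ring⟩

/-- Case C: m = 2k+1, l = k+1. -/
private lemma caseC (k : ℕ) :
    {x : ℕ | ¬ ∃ α β γ : ℕ, x = α * (k+1) + β * (2*k+1) + γ * (2*k+1+1)}.ncard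
      = (2*k+1-1)^2/4 := by
  have hset : {x : ℕ | ¬ ∃ α β γ : ℕ, x = α * (k+1) + β * (2*k+1) + γ * (2*k+1+1)}
      = ↑((range k).biUnion fun i => (range (2*i+1)).image fun j => (k-i) + j*(k+1)) := by
    ext x
    simp only [Set.mem_setOf_eq, Finset.coe_biUnion, Set.mem_iUnion, Finset.mem_coe,
      Finset.mem_image, Finset.mem_range, memC]
    constructor
    · intro h
      -- gap → in some block; argue by contradiction via representation construction
      by_contra hc
      push_neg at hc
      apply h
      have hdm := Nat.div_add_mod x (k+1)
      set r := x % (k+1) with hr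
      set q := x / (k+1) with hq
      have hrk : r < k + 1 := Nat.mod_lt x (by omega)
      rcases Nat.eq_zero_or_pos r with h0 | hpos
      · refine ⟨q, 0, ?_⟩
        have e : q*(k+1) = (k+1)*q := by ring
        omega
      · set i := k - r with hi
        have hik : i < k := by omega
        have hki : k - i = r := by omega
        have hq2 : 2*i + 1 ≤ q := by
          by_contra hq3
          push_neg at hq3
          exact absurd (by
            have e : (k+1)*q = q*(k+1) := by ring
            omega : (k-i) + q*(k+1) = x) (hc i hik q (by omega))
        refine ⟨q - (2*i+1), i+1, ?_⟩
        have e1 : (q - (2*i+1))*(k+1) = q*(k+1) - (2*i+1)*(k+1) := Nat.sub_mul _ _ _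
        have e2 : (2*i+1)*(k+1) ≤ q*(k+1) := Nat.mul_le_mul_right _ hq2
        have e3 : (i+1)*(2*k+1) + r = (2*i+1)*(k+1) + (k - i) + r := by
          have : (i+1)*(2*k+1) + i = (2*i+1)*(k+1) + k := by ring
          omega
        have e4 : (k+1)*q = q*(k+1) := by ring
        omega
    · rintro ⟨i, hik, j, hj, rfl⟩ ⟨a, b, he⟩
      -- block element is not representable
      have hd : (k+1) ∣ (k - i + b) := by
        have h2 : (k - i + b) + j*(k+1) = (k+1)*(a + 2*b) := by
          have e : a*(k+1) + b*(2*k+1) + b = (k+1)*(a+2*b) := by ring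
          omega
        have h3 : (k+1) ∣ (k - i + b) + j*(k+1) := ⟨a + 2*b, h2⟩
        have h4 : (k+1) ∣ j*(k+1) := Dvd.intro_left j rfl
        have h5 := Nat.dvd_sub h3 h4
        simpa using h5
      have hb : i + 1 ≤ b := by
        have hpos : 0 < k - i + b := by omega
        have h6 := Nat.le_of_dvd hpos hd
        omega
      have h5 : (i+1)*(2*k+1) ≤ b*(2*k+1) := Nat.mul_le_mul_right _ hb
      have h6 : k - i + j*(k+1) < (i+1)*(2*k+1) := by
        have e1 : j*(k+1) ≤ (2*i)*(k+1) := Nat.mul_le_mul_right _ (by omega)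
        have e2 : (i+1)*(2*k+1) + i = (2*i)*(k+1) + 2*k+1 := by ring
        omega
      omega
  rw [hset, Set.ncard_coe_finset, Finset.card_biUnion]
  · have hterm : ∀ i ∈ range k, ((range (2*i+1)).image fun j => (k-i) + j*(k+1)).card
        = 2*i+1 := by
      intro i _
      rw [Finset.card_image_of_injective _ (fun a b hab => by
        have : a * (k+1) = b * (k+1) := by omega
        exact Nat.eq_of_mul_eq_mul_right (by omega) this), Finset.card_range]
    rw [Finset.sum_congr rfl hterm, oddsum]
    have e : (2*k+1-1)^2 = k^2*4 := by
      simp only [Nat.add_sub_cancel]; ring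
    omega
  · intro a ha b hb hab
    rw [Function.onFun, Finset.disjoint_left]
    rintro x hx hx'
    simp only [Finset.mem_coe, Finset.mem_image, Finset.mem_range] at hx hx' ha hb
    obtain ⟨j, _, rfl⟩ := hx
    obtain ⟨j', _, he⟩ := hx'
    apply hab
    have h1 : (k - a + j*(k+1)) % (k+1) = k - a := by
      rw [Nat.add_mul_mod_self_right, Nat.mod_eq_of_lt (by omega)]
    have h2 : (k - b + j'*(k+1)) % (k+1) = k - b := by
      rw [Nat.add_mul_mod_self_right, Nat.mod_eq_of_lt (by omega)]
    have : k - a = k - b := by rw [← h1, ← he, h2]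
    omega

/-- For m ≥ 2, m/2 ≤ ℓ < m and ℓ ∈ {⌊(m+1)/2⌋, m-1}, the
numerical semigroup ⟨ℓ, m, m+1⟩ has genus ⌊(m-1)²/4⌋. -/
theorem stmt10 (m l : ℕ) (hm : 2 ≤ m) (h1 : m ≤ 2 * l) (h2 : l < m)
    (h3 : l = (m + 1) / 2 ∨ l = m - 1) :
    {x : ℕ | ¬ ∃ α β γ : ℕ, x = α * l + β * m + γ * (m + 1)}.ncard
      = (m - 1) ^ 2 / 4 := by
  rcases h3 with h3 | h3
  · rcases Nat.even_or_odd m with ⟨r, hr⟩ | ⟨r, hr⟩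
    · -- m = 2l
      have hml : m = 2 * l := by omega
      obtain ⟨t, rfl⟩ : ∃ t, l = t + 1 := ⟨l - 1, by omega⟩
      subst hml
      exact caseB t
    · -- m = 2l - 1, m = 2r+1, l = r+1
      have hlr : l = r + 1 := by omega
      subst hr hlr
      exact caseC r
  · -- l = m - 1
    obtain ⟨n, rfl⟩ : ∃ n, m = n + 2 := ⟨m - 2, by omega⟩
    have hln : l = n + 1 := by omega
    subst hln
    exact caseA n
end

section
/- Let s ≥ 2 be an integer and let T = ℕ \ {r·s + t + 1 : r, t ≥ 0, r + t ≤ s - 2}. Then T equals {0} ∪ ⋃_{j=1}^{s-2} [j·s - (j-1), j·s] ∪ {n : n ≥ s² - 2s + 2}, and T is a numerical semigroup. -/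
/-!
Every positive integer is uniquely `q * s + t + 1` with `t < s`, and it lies outside `hermT s`
exactly when `q + t ≤ s - 2`. Both the description of `hermT s` as a union of intervals and its
closure under addition then reduce to linear arithmetic in `q` and `t`: adding two elements
with `q + t > s - 2` either keeps the carry-free sum or carries one `s` over, and in both cases
the new `q + t` still exceeds `s - 2`.
-/

def hermT (s : ℕ) : Set ℕ :=
  {x : ℕ | ¬ ∃ r t : ℕ, r + t ≤ s - 2 ∧ x = r * s + t + 1}

namespace Nat

theorem mul_add_eq_mul_add_iff {s q t r u : ℕ} (ht : t < s) (hu : u < s) :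
    r * s + u = q * s + t ↔ r = q ∧ u = t := by
  constructor
  · intro h
    have hs : 0 < s := by omega
    have hdiv := congrArg (· / s) h
    have hmod := congrArg (· % s) h
    simp only [add_comm _ u, add_comm _ t, add_mul_div_right _ _ hs,
      add_mul_mod_self_right, div_eq_of_lt ht, div_eq_of_lt hu,
      mod_eq_of_lt ht, mod_eq_of_lt hu] at hdiv hmod
    omega
  · rintro ⟨rfl, rfl⟩
    rfl

theorem exists_eq_mul_add_succ {s x : ℕ} (hs : 0 < s) (hx : x ≠ 0) :
    ∃ q t, t < s ∧ x = q * s + t + 1 :=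
  ⟨(x - 1) / s, (x - 1) % s, mod_lt _ hs, by have := div_add_mod' (x - 1) s; omega⟩

theorem mul_add_succ_mem_Icc_iff {s q t j : ℕ} (ht : t < s) (hj : 1 ≤ j) (hjs : j ≤ s) :
    q * s + t + 1 ∈ Set.Icc (j * s - (j - 1)) (j * s) ↔ q + 1 = j ∧ s ≤ q + t + 1 := by
  obtain ⟨k, rfl⟩ : ∃ k, j = k + 1 := ⟨j - 1, by omega⟩
  rw [Set.mem_Icc, add_mul, one_mul, Nat.add_sub_cancel]
  rcases lt_trichotomy q k with hqk | rfl | hkq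
  · have := mul_le_mul_right s (succ_le_of_lt hqk)
    rw [succ_mul] at this
    omega
  · omega
  · have := mul_le_mul_right s (succ_le_of_lt hkq)
    rw [succ_mul] at this
    omega

theorem sq_sub_two_mul_add_two_le_mul_add_succ_iff {s q t : ℕ} (hs : 2 ≤ s) (ht : t < s) :
    s ^ 2 - 2 * s + 2 ≤ q * s + t + 1 ↔ s - 2 ≤ q ∧ s - 1 ≤ q + t := by
  obtain ⟨m, rfl⟩ : ∃ m, s = m + 2 := ⟨s - 2, by omega⟩
  have hsq : (m + 2) ^ 2 - 2 * (m + 2) + 2 = m * (m + 2) + 2 := by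
    rw [show (m + 2) ^ 2 = m * (m + 2) + 2 * (m + 2) by ring, Nat.add_sub_cancel]
  rw [hsq]
  rcases lt_trichotomy q m with hqm | rfl | hmq
  · have := mul_le_mul_right (m + 2) (succ_le_of_lt hqm)
    rw [succ_mul] at this
    omega
  · omega
  · have := mul_le_mul_right (m + 2) (succ_le_of_lt hmq)
    rw [succ_mul] at this
    omega

end Nat

namespace hermT

theorem zero_mem (s : ℕ) : 0 ∈ hermT s := by
  rintro ⟨r, t, -, h⟩
  omega

theorem mul_add_succ_mem_iff {s q t : ℕ} (ht : t < s) :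
    q * s + t + 1 ∈ hermT s ↔ s - 2 < q + t := by
  simp only [hermT, Set.mem_ofPred_eq, not_exists, not_and]
  constructor
  · intro h
    by_contra! hlt
    exact h q t (by omega) rfl
  · intro h r u hru heq
    have hu : u < s := by omega
    obtain ⟨rfl, rfl⟩ := (Nat.mul_add_eq_mul_add_iff (r := r) (q := q) ht hu).mp (by omega)
    omega

theorem add_mem {s a b : ℕ} (hs : 0 < s) (ha : a ∈ hermT s) (hb : b ∈ hermT s) :
    a + b ∈ hermT s := by
  rcases eq_or_ne a 0 with rfl | ha0
  · simpa using hb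
  rcases eq_or_ne b 0 with rfl | hb0
  · simpa using ha
  obtain ⟨qa, ta, hta, rfl⟩ := Nat.exists_eq_mul_add_succ hs ha0
  obtain ⟨qb, tb, htb, rfl⟩ := Nat.exists_eq_mul_add_succ hs hb0
  rw [mul_add_succ_mem_iff hta] at ha
  rw [mul_add_succ_mem_iff htb] at hb
  by_cases hcarry : ta + tb + 1 < s
  · have hsum : qa * s + ta + 1 + (qb * s + tb + 1) = (qa + qb) * s + (ta + tb + 1) + 1 := by ring
    rw [hsum, mul_add_succ_mem_iff hcarry]
    omega
  · have hsum : qa * s + ta + 1 + (qb * s + tb + 1)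
        = (qa + qb + 1) * s + (ta + tb + 1 - s) + 1 := by
      rw [show (qa + qb + 1) * s = qa * s + qb * s + s by ring]
      omega
    rw [hsum, mul_add_succ_mem_iff (by omega)]
    omega

theorem eq_union_Icc {s : ℕ} (hs : 2 ≤ s) :
    hermT s = {0} ∪ (⋃ j ∈ Finset.Icc 1 (s - 2), Set.Icc (j * s - (j - 1)) (j * s))
        ∪ {n : ℕ | s ^ 2 - 2 * s + 2 ≤ n} := by
  ext x
  rcases eq_or_ne x 0 with rfl | hx
  · simp [zero_mem]
  obtain ⟨q, t, ht, rfl⟩ := Nat.exists_eq_mul_add_succ (show 0 < s by omega) hx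
  have hblock : q * s + t + 1 ∈ ⋃ j ∈ Finset.Icc 1 (s - 2), Set.Icc (j * s - (j - 1)) (j * s)
      ↔ q + 1 ≤ s - 2 ∧ s ≤ q + t + 1 := by
    rw [Set.mem_iUnion₂]
    constructor
    · rintro ⟨j, hj, hmem⟩
      rw [Finset.mem_Icc] at hj
      rw [Nat.mul_add_succ_mem_Icc_iff ht hj.1 (by omega)] at hmem
      omega
    · rintro ⟨hq, hqt⟩
      exact ⟨q + 1, Finset.mem_Icc.mpr ⟨by omega, hq⟩,
        (Nat.mul_add_succ_mem_Icc_iff ht (by omega) (by omega)).mpr ⟨rfl, hqt⟩⟩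
  simp only [Set.mem_union, Set.mem_singleton_iff, Set.mem_ofPred_eq, mul_add_succ_mem_iff ht,
    hblock, Nat.sq_sub_two_mul_add_two_le_mul_add_succ_iff hs ht]
  omega

end hermT

/-- T equals {0} ∪ ⋃_{j=1}^{s-2} [js-(j-1), js] ∪ {n ≥ s²-2s+2},
and T is a numerical semigroup (contains 0, closed under addition, cofinite). -/
theorem stmt12 (s : ℕ) (hs : 2 ≤ s) :
    (hermT s = {0} ∪ (⋃ j ∈ Finset.Icc 1 (s - 2), Set.Icc (j * s - (j - 1)) (j * s))
        ∪ {n : ℕ | s ^ 2 - 2 * s + 2 ≤ n}) ∧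
    0 ∈ hermT s ∧
    (∀ a b : ℕ, a ∈ hermT s → b ∈ hermT s → a + b ∈ hermT s) ∧
    (hermT s)ᶜ.Finite := by
  have heq := hermT.eq_union_Icc hs
  refine ⟨heq, hermT.zero_mem s, fun a b => hermT.add_mem (by omega), ?_⟩
  exact (Set.finite_lt_nat (s ^ 2 - 2 * s + 2)).subset fun x hx =>
    Set.mem_ofPred.mpr (Nat.lt_of_not_le fun hle => hx (heq ▸ Set.mem_union_right _ hle))
end

section
/- Let s ≥ 2, let T = ℕ \ {r·s + t + 1 : r, t ≥ 0, r + t ≤ s - 2}, and let d be a positive integer coprime to s(s-1). Then S = {h/d : h ∈ T, d ∣ h} is a numerical semigroup, and the number of gaps of S (its genus) satisfies: if d divides s² - s + 1, the genus of S equals (1/2)((s² - s + 1)/d - 1). -/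
/-- S = {h/d : h ∈ T, d ∣ h}. -/
def hermS (s d : ℕ) : Set ℕ :=
  {x : ℕ | ∃ h ∈ hermT s, d ∣ h ∧ x = h / d}

theorem Set.ncard_compl_eq_of_add_eq_iff_notMem {A : Set ℕ} {N : ℕ} (h0 : 0 ∈ A)
    (hN : ∀ x, N ≤ x → x ∈ A)
    (hsymm : ∀ x y, 0 < x → 0 < y → x + y = N → (x ∈ A ↔ y ∉ A)) :
    Aᶜ.ncard = (N - 1) / 2 := by
  classical
  set gaps := (Finset.Ioo 0 N).filter (· ∉ A)
  set elts := (Finset.Ioo 0 N).filter (· ∈ A)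
  have hcompl : Aᶜ = gaps := by
    ext x
    simp only [gaps, Set.mem_compl_iff, Finset.coe_filter, Finset.mem_Ioo, Set.mem_ofPred_eq]
    refine ⟨fun hx => ⟨⟨Nat.pos_of_ne_zero ?_, ?_⟩, hx⟩, fun h => h.2⟩
    · rintro rfl
      exact hx h0
    · by_contra h
      exact hx (hN x (by omega))
  have hpair : gaps.card = elts.card := by
    refine Finset.card_nbij' (N - ·) (N - ·) ?_ ?_ ?_ ?_ <;>
      intro x hx <;>
      simp only [gaps, elts, Finset.coe_filter, Finset.mem_Ioo, Set.mem_ofPred_eq] at hx ⊢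
    · exact ⟨by omega, (hsymm (N - x) x (by omega) hx.1.1 (by omega)).2 hx.2⟩
    · exact ⟨by omega, (hsymm x (N - x) hx.1.1 (by omega) (by omega)).1 hx.2⟩
    all_goals omega
  have htotal : elts.card + gaps.card = N - 1 := by
    rw [Finset.card_filter_add_card_filter_not, Nat.card_Ioo, Nat.sub_zero]
  rw [hcompl, Set.ncard_coe_finset]
  omega

theorem Nat.eq_and_eq_of_mul_add_eq_mul_add {s q r m e : ℕ} (hm : m < s) (he : e < s)
    (h : s * q + m = s * r + e) : q = r ∧ m = e := by
  have hs : 0 < s := by omega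
  have hq : q = r := by
    simpa [Nat.mul_add_div hs, Nat.div_eq_of_lt hm, Nat.div_eq_of_lt he] using congrArg (· / s) h
  subst hq
  exact ⟨rfl, by omega⟩

theorem Nat.exists_mul_add_eq {s : ℕ} (hs : 0 < s) (x : ℕ) : ∃ q m, m < s ∧ s * q + m = x :=
  ⟨x / s, x % s, Nat.mod_lt x hs, Nat.div_add_mod x s⟩

variable {s : ℕ}

theorem mul_add_mem_hermT_iff (hs : 2 ≤ s) {q m : ℕ} (hm : m < s) :
    s * q + m ∈ hermT s ↔ m = 0 ∨ s ≤ q + m := by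
  rw [← not_iff_not]
  simp only [hermT, Set.mem_ofPred_eq, not_not, not_or, not_le]
  constructor
  · rintro ⟨r, t, hrt, h⟩
    obtain ⟨rfl, rfl⟩ := Nat.eq_and_eq_of_mul_add_eq_mul_add (r := r) (e := t + 1) hm
      (by omega) (by rw [h]; ring)
    omega
  · rintro ⟨hm0, hqm⟩
    exact ⟨q, m - 1, by omega, by rw [mul_comm]; omega⟩

theorem zero_mem_hermT (hs : 2 ≤ s) : 0 ∈ hermT s :=
  (mul_add_mem_hermT_iff (q := 0) hs (by omega)).2 (Or.inl rfl)

theorem add_mem_hermT (hs : 2 ≤ s) {x y : ℕ} (hx : x ∈ hermT s) (hy : y ∈ hermT s) :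
    x + y ∈ hermT s := by
  obtain ⟨p, a, ha, rfl⟩ := Nat.exists_mul_add_eq (s := s) (by omega) x
  obtain ⟨q, b, hb, rfl⟩ := Nat.exists_mul_add_eq (s := s) (by omega) y
  rw [mul_add_mem_hermT_iff hs ha] at hx
  rw [mul_add_mem_hermT_iff hs hb] at hy
  rcases lt_or_ge (a + b) s with hab | hab
  · rw [show s * p + a + (s * q + b) = s * (p + q) + (a + b) by ring,
      mul_add_mem_hermT_iff hs hab]
    omega
  · have hsum : s * p + a + (s * q + b) = s * (p + q + 1) + (a + b - s) := by
      rw [mul_add_one, mul_add]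
      omega
    rw [hsum, mul_add_mem_hermT_iff hs (by omega)]
    omega

theorem mem_hermT_of_le (hs : 2 ≤ s) {x : ℕ} (hx : s * (s - 1) ≤ x) : x ∈ hermT s := by
  obtain ⟨q, m, hm, rfl⟩ := Nat.exists_mul_add_eq (s := s) (by omega) x
  rw [mul_add_mem_hermT_iff hs hm]
  by_contra! h
  have : s * (q + 1) ≤ s * (s - 1) := Nat.mul_le_mul_left s (by omega)
  rw [mul_add_one] at this
  omega

theorem mem_hermT_iff_notMem (hs : 2 ≤ s) {x y : ℕ} (hx : 0 < x) (hy : 0 < y)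
    (hxy : x + y = s * (s - 1) + 1) : x ∈ hermT s ↔ y ∉ hermT s := by
  obtain ⟨q, m, hm, rfl⟩ := Nat.exists_mul_add_eq (s := s) (by omega) x
  obtain ⟨q', m', hm', rfl⟩ := Nat.exists_mul_add_eq (s := s) (by omega) y
  rw [mul_add_mem_hermT_iff hs hm, mul_add_mem_hermT_iff hs hm']
  have hqm : m = 0 → 0 < q := fun h => Nat.pos_of_ne_zero (by rintro rfl; omega)
  have hqm' : m' = 0 → 0 < q' := fun h => Nat.pos_of_ne_zero (by rintro rfl; omega)
  -- the remainders add up to `1` or to `s + 1`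
  rcases lt_or_ge (m + m') s with hmm | hmm
  · obtain ⟨hqq, hrem⟩ := Nat.eq_and_eq_of_mul_add_eq_mul_add (q := q + q') (r := s - 1) hmm
      (by omega : 1 < s) (by rw [mul_add]; omega)
    omega
  · obtain ⟨hqq, hrem⟩ := Nat.eq_and_eq_of_mul_add_eq_mul_add (q := q + q' + 1) (r := s - 1)
      (by omega : m + m' - s < s) (by omega : 1 < s) (by rw [mul_add_one, mul_add]; omega)
    omega

theorem mem_hermS_iff {d : ℕ} (hd : 0 < d) {x : ℕ} : x ∈ hermS s d ↔ d * x ∈ hermT s := by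
  constructor
  · rintro ⟨h, hT, hdvd, rfl⟩
    rwa [Nat.mul_div_cancel' hdvd]
  · exact fun h => ⟨d * x, h, dvd_mul_right d x, (Nat.mul_div_cancel_left x hd).symm⟩

theorem stmt13_general (s d : ℕ) (hs : 2 ≤ s) (hd : 0 < d) :
    (0 ∈ hermS s d ∧
      (∀ a b : ℕ, a ∈ hermS s d → b ∈ hermS s d → a + b ∈ hermS s d) ∧
      (hermS s d)ᶜ.Finite) ∧
    (d ∣ s ^ 2 - s + 1 →
      {x : ℕ | x ∉ hermS s d}.ncard = ((s ^ 2 - s + 1) / d - 1) / 2) := by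
  have hzero : 0 ∈ hermS s d := mem_hermS_iff hd |>.2 (by rw [mul_zero]; exact zero_mem_hermT hs)
  have hlarge : ∀ x, s * (s - 1) ≤ d * x → x ∈ hermS s d :=
    fun x hx => mem_hermS_iff hd |>.2 (mem_hermT_of_le hs hx)
  refine ⟨⟨hzero, fun a b ha hb => ?_, ?_⟩, ?_⟩
  · rw [mem_hermS_iff hd] at ha hb ⊢
    rw [mul_add]
    exact add_mem_hermT hs ha hb
  · refine (Set.finite_Iio (s * (s - 1))).subset fun x hx => Set.mem_Iio.2 ?_
    by_contra! h
    exact hx (hlarge x (h.trans (Nat.le_mul_of_pos_left x hd)))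
  · rintro ⟨N, hN⟩
    rw [sq, ← Nat.mul_sub_one] at hN ⊢
    rw [hN, Nat.mul_div_cancel_left N hd]
    refine Set.ncard_compl_eq_of_add_eq_iff_notMem hzero (fun x hx => hlarge x (by nlinarith))
      fun x y hx hy hxy => ?_
    rw [mem_hermS_iff hd, mem_hermS_iff hd]
    exact mem_hermT_iff_notMem hs (by positivity) (by positivity) (by rw [← mul_add, hxy, hN])

/-- for d coprime to s(s-1), S is a numerical semigroup, and if
d ∣ s² - s + 1 then the genus of S is (1/2)((s²-s+1)/d - 1). -/
theorem stmt13 (s d : ℕ) (hs : 2 ≤ s) (hd : 0 < d)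
    (hcop : Nat.Coprime d (s * (s - 1))) :
    (0 ∈ hermS s d ∧
      (∀ a b : ℕ, a ∈ hermS s d → b ∈ hermS s d → a + b ∈ hermS s d) ∧
      (hermS s d)ᶜ.Finite) ∧
    (d ∣ s ^ 2 - s + 1 →
      {x : ℕ | x ∉ hermS s d}.ncard = ((s ^ 2 - s + 1) / d - 1) / 2) :=
  stmt13_general s d hs hd
end

section
/- Let s be a prime power with s ≡ 3 (mod 7) and s > 3, and let T = {0} ∪ ⋃_{j=1}^{s-2} [js-(j-1), js] ∪ {n : n ≥ s²-2s+2}. Then the positive elements of T that are ≤ 7s and divisible by 7 are exactly 3s-2, 5s-1, 6s-4, and 7s; hence their count is 4. -/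
/-- T = {0} ∪ ⋃_{j=1}^{s-2} [js-(j-1), js] ∪ {n : n ≥ s²-2s+2}. -/
def hermTset (s : ℕ) : Set ℕ :=
  {0} ∪ (⋃ j ∈ Finset.Icc 1 (s - 2), Set.Icc (j * s - (j - 1)) (j * s))
    ∪ {n : ℕ | s ^ 2 - 2 * s + 2 ≤ n}

/-!
Below 7s the tail {n ≥ s² - 2s + 2} of T plays no role once s ≥ 9, so the positive part of T up
to 7s is the union of the seven blocks [js - (j - 1), js], j = 1, …, 7. The block j consists of
the numbers js - i with i < j, and since js ≡ 3j (mod 7), such a number is a multiple of 7 iff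
i ≡ 3j (mod 7). For j = 1, …, 7 this happens exactly for (j, i) = (3, 2), (5, 1), (6, 4), (7, 0).
-/

lemma hermTset_inter_Ioc {s : ℕ} (hs : 9 ≤ s) :
    hermTset s ∩ Set.Ioc 0 (7 * s) = ⋃ j ∈ Finset.Icc 1 7, Set.Icc (j * s - (j - 1)) (j * s) := by
  have hsq : 9 * s ≤ s ^ 2 := by nlinarith
  ext n
  simp only [hermTset, Set.mem_inter_iff, Set.mem_union, Set.mem_singleton_iff, Set.mem_iUnion,
    Set.mem_ofPred_eq, Set.mem_Ioc, Set.mem_Icc, Finset.mem_Icc, exists_prop]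
  constructor
  · rintro ⟨(rfl | ⟨j, ⟨hj1, hjs⟩, hjn⟩) | htail, hpos, hn7⟩
    · omega
    · refine ⟨j, ⟨hj1, ?_⟩, hjn⟩
      by_contra! hj8
      have : 8 * s ≤ j * s := Nat.mul_le_mul_right s hj8
      omega
    · omega
  · rintro ⟨j, ⟨hj1, hj7⟩, hjn⟩
    have : j * s ≤ 7 * s := Nat.mul_le_mul_right s hj7
    have : s ≤ j * s := Nat.le_mul_of_pos_left s hj1
    exact ⟨Or.inl (Or.inr ⟨j, ⟨hj1, by omega⟩, hjn⟩), by omega, by omega⟩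

lemma seven_dvd_mem_blocks_iff {s n : ℕ} (h7 : s % 7 = 3) :
    (n ∈ ⋃ j ∈ Finset.Icc 1 7, Set.Icc (j * s - (j - 1)) (j * s)) ∧ 7 ∣ n ↔
      n = 3 * s - 2 ∨ n = 5 * s - 1 ∨ n = 6 * s - 4 ∨ n = 7 * s := by
  simp only [Set.mem_iUnion, Finset.mem_Icc, Set.mem_Icc, exists_prop]
  constructor
  · rintro ⟨⟨j, ⟨hj1, hj7⟩, hjn⟩, hdvd⟩
    interval_cases j <;> omega
  · rintro (rfl | rfl | rfl | rfl)
    · exact ⟨⟨3, by omega, by omega⟩, by omega⟩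
    · exact ⟨⟨5, by omega, by omega⟩, by omega⟩
    · exact ⟨⟨6, by omega, by omega⟩, by omega⟩
    · exact ⟨⟨7, by omega, by omega⟩, by omega⟩

theorem stmt14_general (s : ℕ)
    (h7 : s % 7 = 3) (h3 : 3 < s) :
    {n : ℕ | n ∈ hermTset s ∧ 0 < n ∧ n ≤ 7 * s ∧ 7 ∣ n}
        = ({3 * s - 2, 5 * s - 1, 6 * s - 4, 7 * s} : Set ℕ) ∧
    {n : ℕ | n ∈ hermTset s ∧ 0 < n ∧ n ≤ 7 * s ∧ 7 ∣ n}.ncard = 4 := by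
  have hset : {n : ℕ | n ∈ hermTset s ∧ 0 < n ∧ n ≤ 7 * s ∧ 7 ∣ n}
      = ({3 * s - 2, 5 * s - 1, 6 * s - 4, 7 * s} : Set ℕ) := by
    ext n
    simp only [Set.mem_ofPred_eq, Set.mem_insert_iff, Set.mem_singleton_iff]
    rw [← seven_dvd_mem_blocks_iff h7, ← hermTset_inter_Ioc (by omega)]
    simp only [Set.mem_inter_iff, Set.mem_Ioc, and_assoc]
  refine ⟨hset, hset ▸ Set.ncard_eq_four.2 ?_⟩
  exact ⟨_, _, _, _, by omega, by omega, by omega, by omega, by omega, by omega, rfl⟩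

/-- for s a prime power with s ≡ 3 (mod 7) and s > 3, the positive
elements of T that are ≤ 7s and divisible by 7 are exactly 3s-2, 5s-1, 6s-4, 7s;
hence there are 4 of them. -/
theorem stmt14 (s : ℕ) (hpp : ∃ p k : ℕ, Nat.Prime p ∧ 0 < k ∧ s = p ^ k)
    (h7 : s % 7 = 3) (h3 : 3 < s) :
    {n : ℕ | n ∈ hermTset s ∧ 0 < n ∧ n ≤ 7 * s ∧ 7 ∣ n}
        = ({3 * s - 2, 5 * s - 1, 6 * s - 4, 7 * s} : Set ℕ) ∧
    {n : ℕ | n ∈ hermTset s ∧ 0 < n ∧ n ≤ 7 * s ∧ 7 ∣ n}.ncard = 4 :=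
  stmt14_general s h7 h3
end

section
/- Let s be a prime power, q = s², and let F'(X₀,X₁,X₂) = X₀^s X₂ + X₂^s X₁ + X₁^s X₀ - 3(X₀X₁X₂)^{(s+1)/3} with 3 ∣ s+1. If ε is a primitive cube root of unity in the algebraic closure of F_q and G(X₀,X₁,X₂) = X₀^s X₂ + X₂^s X₁ + X₁^s X₀, then F'(X₀³, X₁³, X₂³) = G(X₀,X₁,X₂) · G(εX₀, εX₁, X₂) · G(X₀, X₁, εX₂). -/
/-!
Write `a = x^s z`, `b = z^s y`, `c = y^s x`, so that `G(x,y,z) = a + b + c`.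
Since `s ≡ 2 (mod 3)`, `ε^s = ε²` and `ε^(s+1) = 1`, hence `G(εx,εy,z) = ε²a + εb + c` and
`G(x,y,εz) = εa + ε²b + c`. The product of the three is then the classical factorisation of
`a³ + b³ + c³ - 3abc`, and `a³ + b³ + c³ = G(x³,y³,z³)`, `abc = (xyz)^(s+1) = (x³y³z³)^((s+1)/3)`.
-/

open MvPolynomial

def hermG {R : Type*} [CommRing R] (s : ℕ) (x y z : R) : R :=
  x ^ s * z + z ^ s * y + y ^ s * x

section CubeRoot

variable {R : Type*} [CommRing R] {ω : R}

theorem pow_three_eq_one_of_sq_add_add_one (hω : ω ^ 2 + ω + 1 = 0) : ω ^ 3 = 1 := by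
  linear_combination (ω - 1) * hω

theorem add_mul_add_mul_add_of_sq_add_add_one (hω : ω ^ 2 + ω + 1 = 0) (a b c : R) :
    (a + b + c) * (ω ^ 2 * a + ω * b + c) * (ω * a + ω ^ 2 * b + c)
      = a ^ 3 + b ^ 3 + c ^ 3 - 3 * a * b * c := by
  linear_combination
    (a + b + c) * ((a ^ 2 + b ^ 2 + ω * a * b) * (ω - 1) + a * b + a * c + b * c) * hω

theorem pow_eq_sq_of_pow_three_eq_one (hω : ω ^ 3 = 1) {s : ℕ} (hs : s % 3 = 2) :
    ω ^ s = ω ^ 2 := by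
  rw [← Nat.div_add_mod s 3, hs, pow_add, pow_mul, hω, one_pow, one_mul]

end CubeRoot

namespace hermG

variable {R : Type*} [CommRing R] {s : ℕ}

theorem cube (x y z : R) :
    hermG s (x ^ 3) (y ^ 3) (z ^ 3) = (x ^ s * z) ^ 3 + (z ^ s * y) ^ 3 + (y ^ s * x) ^ 3 := by
  unfold hermG; ring

theorem scale_first_two {ω : R} (hω : ω ^ 3 = 1) (hs : s % 3 = 2) (x y z : R) :
    hermG s (ω * x) (ω * y) z = ω ^ 2 * (x ^ s * z) + ω * (z ^ s * y) + y ^ s * x := by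
  rw [hermG, mul_pow, mul_pow, pow_eq_sq_of_pow_three_eq_one hω hs]
  linear_combination (y ^ s * x) * hω

theorem scale_third {ω : R} (hω : ω ^ 3 = 1) (hs : s % 3 = 2) (x y z : R) :
    hermG s x y (ω * z) = ω * (x ^ s * z) + ω ^ 2 * (z ^ s * y) + y ^ s * x := by
  rw [hermG, mul_pow, pow_eq_sq_of_pow_three_eq_one hω hs]
  ring

theorem cube_sub_eq_mul {ω : R} (hω : ω ^ 2 + ω + 1 = 0) (hs : s % 3 = 2) (x y z : R) :
    hermG s (x ^ 3) (y ^ 3) (z ^ 3) - 3 * (x ^ 3 * y ^ 3 * z ^ 3) ^ ((s + 1) / 3)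
      = hermG s x y z * hermG s (ω * x) (ω * y) z * hermG s x y (ω * z) := by
  have hω3 := pow_three_eq_one_of_sq_add_add_one hω
  have hprod :
      (x ^ 3 * y ^ 3 * z ^ 3) ^ ((s + 1) / 3) = (x ^ s * z) * (z ^ s * y) * (y ^ s * x) := by
    rw [← mul_pow, ← mul_pow, ← pow_mul, Nat.mul_div_cancel' (by omega)]
    ring
  rw [cube, hprod, scale_first_two hω3 hs, scale_third hω3 hs, hermG,
    add_mul_add_mul_add_of_sq_add_add_one hω]
  ring

end hermG

theorem stmt17_general {K : Type*} [Field K] (s : ℕ)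
    (h3 : s % 3 = 2) (ε : K) (hε : ε ^ 2 + ε + 1 = 0) :
    hermG s ((X 0 : MvPolynomial (Fin 3) K) ^ 3) (X 1 ^ 3) (X 2 ^ 3)
        - 3 * ((X 0 : MvPolynomial (Fin 3) K) ^ 3 * X 1 ^ 3 * X 2 ^ 3) ^ ((s + 1) / 3)
      = hermG s (X 0 : MvPolynomial (Fin 3) K) (X 1) (X 2)
        * hermG s (C ε * X 0) (C ε * X 1) (X 2)
        * hermG s (X 0) (X 1) (C ε * X 2) :=
  hermG.cube_sub_eq_mul (by simpa using congrArg C hε) h3 _ _ _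

/-- with s ≡ 2 (mod 3) a power of p ≠ 3, ε a primitive cube root
of unity, and F'(X₀,X₁,X₂) = G(X₀,X₁,X₂) - 3(X₀X₁X₂)^{(s+1)/3}, one has
F'(X₀³,X₁³,X₂³) = G(X₀,X₁,X₂)·G(εX₀,εX₁,X₂)·G(X₀,X₁,εX₂). -/
theorem stmt17 {K : Type*} [Field K] [IsAlgClosed K] (p n s : ℕ)
    (hp : p.Prime) [CharP K p] (hs : s = p ^ n) (hn : 0 < n)
    (h3 : s % 3 = 2) (hp3 : p ≠ 3) (ε : K) (hε : ε ^ 2 + ε + 1 = 0) :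
    hermG s ((X 0 : MvPolynomial (Fin 3) K) ^ 3) (X 1 ^ 3) (X 2 ^ 3)
        - 3 * ((X 0 : MvPolynomial (Fin 3) K) ^ 3 * X 1 ^ 3 * X 2 ^ 3) ^ ((s + 1) / 3)
      = hermG s (X 0 : MvPolynomial (Fin 3) K) (X 1) (X 2)
        * hermG s (C ε * X 0) (C ε * X 1) (X 2)
        * hermG s (X 0) (X 1) (C ε * X 2) :=
  stmt17_general s h3 ε hε
end

section
/- Let s be a prime power with s ≡ 2 (mod 3), q = s². Each of the three fundamental coordinate lines X_i = 0 meets the plane curve defined by X₀^s X₂ + X₂^s X₁ + X₁^s X₀ - 3(X₀X₁X₂)^{(s+1)/3} = 0 in exactly two points, namely two of the three coordinate vertices (1:0:0), (0:1:0), (0:0:1). -/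
/-! On the line `X_i = 0` the term `(X₀X₁X₂)^e` and two of the three cyclic monomials vanish,
leaving a single monomial `X_j^s X_k` with `{i, j, k} = {0, 1, 2}`; it vanishes exactly at the
two coordinate vertices of that line. -/

theorem exists_smul_single_iff {ι M : Type*} [DecidableEq ι] [MulZeroOneClass M]
    (v : ι → M) (j : ι) :
    (∃ c : M, c ≠ 0 ∧ v = c • Pi.single j 1) ↔ v ≠ 0 ∧ ∀ k ≠ j, v k = 0 := by
  constructor
  · rintro ⟨c, hc, rfl⟩
    refine ⟨fun h => hc ?_, fun k hk => by simp [hk]⟩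
    simpa using congr_fun h j
  · rintro ⟨hv, hvk⟩
    refine ⟨v j, fun h => hv ?_, ?_⟩ <;> ext k <;> by_cases hk : k = j <;> simp_all

theorem exists_ne_smul_single_iff_of_apply_eq_zero {M : Type*} [MulZeroOneClass M]
    {v : Fin 3 → M} {i : Fin 3} (hv : v ≠ 0) (hvi : v i = 0) :
    (∃ j, j ≠ i ∧ ∃ c : M, c ≠ 0 ∧ v = c • Pi.single j 1) ↔ ∃ k ≠ i, v k = 0 := by
  fin_cases i <;>
    simp_all [exists_smul_single_iff, Fin.forall_fin_succ, Fin.exists_fin_succ] <;> tauto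

theorem cyclic_pow_mul_sum_sub_eq_zero_iff_of_apply_eq_zero {R : Type*} [CommRing R]
    [NoZeroDivisors R] {s e : ℕ} (hs : s ≠ 0) (he : e ≠ 0) {v : Fin 3 → R} {i : Fin 3}
    (hvi : v i = 0) :
    (v 0) ^ s * v 2 + (v 2) ^ s * v 1 + (v 1) ^ s * v 0 - 3 * (v 0 * v 1 * v 2) ^ e = 0 ↔
      ∃ k ≠ i, v k = 0 := by
  fin_cases i <;> simp_all [Fin.exists_fin_succ, pow_eq_zero_iff] <;> tauto

theorem stmt18_general {K : Type*} [Field K] (s : ℕ)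
    (h3 : s % 3 = 2) :
    ∀ i : Fin 3, ∀ v : Fin 3 → K, v ≠ 0 → v i = 0 →
      ((v 0) ^ s * v 2 + (v 2) ^ s * v 1 + (v 1) ^ s * v 0
          - 3 * (v 0 * v 1 * v 2) ^ ((s + 1) / 3) = 0 ↔
        ∃ j : Fin 3, j ≠ i ∧ ∃ c : K, c ≠ 0 ∧ v = c • (Pi.single j 1 : Fin 3 → K)) := by
  intro i v hv hvi
  rw [exists_ne_smul_single_iff_of_apply_eq_zero hv hvi]
  exact cyclic_pow_mul_sum_sub_eq_zero_iff_of_apply_eq_zero (by omega) (by omega) hvi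

/-- s ≡ 2 (mod 3) a prime power, q = s². Each coordinate line
X_i = 0 meets the curve X₀^s X₂ + X₂^s X₁ + X₁^s X₀ - 3(X₀X₁X₂)^{(s+1)/3} = 0
exactly in the two coordinate vertices different from the i-th one. -/
theorem stmt18 {K : Type*} [Field K] [IsAlgClosed K] (p n s q : ℕ)
    (hp : p.Prime) [CharP K p] (hs : s = p ^ n) (hn : 0 < n)
    (h3 : s % 3 = 2) (hq : q = s ^ 2) :
    ∀ i : Fin 3, ∀ v : Fin 3 → K, v ≠ 0 → v i = 0 →
      ((v 0) ^ s * v 2 + (v 2) ^ s * v 1 + (v 1) ^ s * v 0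
          - 3 * (v 0 * v 1 * v 2) ^ ((s + 1) / 3) = 0 ↔
        ∃ j : Fin 3, j ≠ i ∧ ∃ c : K, c ≠ 0 ∧ v = c • (Pi.single j 1 : Fin 3 → K)) :=
  stmt18_general s h3
end
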